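/- arXiv:2008.11199 — 2 statements merged into one kernel-verified Lean document; each statement's English description precedes it below -/
import Mathlib

section
/- Define ρ = 1 - 1/√κ, α = (1+ρ)/L, β = ρ²/(2-ρ), and μ = ((1-β)/(√α(1+β)))². Then for all κ ≥ 1 and L > 0, μ ∈ (0, L], with μ = L attained at κ = 1. -/
theorem stmt_4 :
    ∀ L κ : ℝ, 0 < L → 1 ≤ κ →
    ∀ ρ α β μ : ℝ,
      ρ = 1 - 1 / Real.sqrt κ →
      α = (1 + ρ) / L →
      β = ρ ^ 2 / (2 - ρ) →
      μ = ((1 - β) / (Real.sqrt α * (1 + β))) ^ 2 →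
      (0 < μ ∧ μ ≤ L) ∧ (κ = 1 → μ = L) := by
  intro L κ hL hκ ρ α β μ hρ hα hβ hμ
  have hs : 1 ≤ Real.sqrt κ := by
    rw [show (1:ℝ) = Real.sqrt 1 by simp]
    exact Real.sqrt_le_sqrt hκ
  have hs0 : 0 < Real.sqrt κ := lt_of_lt_of_le one_pos hs
  have hρ0 : 0 ≤ ρ := by
    rw [hρ]
    have := (div_le_one hs0).mpr hs
    linarith
  have hρ1 : ρ < 1 := by
    rw [hρ]
    have : 0 < 1 / Real.sqrt κ := by positivity
    linarith
  have h2ρ : 0 < 2 - ρ := by linarith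
  have hβ0 : 0 ≤ β := by rw [hβ]; positivity
  have hβ1 : β < 1 := by
    rw [hβ, div_lt_one h2ρ]; nlinarith
  have hα0 : 0 < α := by rw [hα]; positivity
  have hsq : Real.sqrt α ^ 2 = α := Real.sq_sqrt hα0.le
  have hμeq : μ = (1 - β) ^ 2 / (α * (1 + β) ^ 2) := by
    rw [hμ, div_pow, mul_pow, hsq]
  have hμ0 : 0 < μ := by
    rw [hμeq]
    have h1β : 0 < 1 - β := by linarith
    positivity
  have hαL : α * L = 1 + ρ := by rw [hα]; field_simp
  refine ⟨⟨hμ0, ?_⟩, ?_⟩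
  · rw [hμeq, div_le_iff₀ (by positivity)]
    rw [show L * (α * (1 + β) ^ 2) = (α * L) * (1 + β) ^ 2 from by ring, hαL]
    nlinarith [mul_nonneg hρ0 (sq_nonneg (1 + β)), hβ0]
  · intro h1
    have hρ' : ρ = 0 := by rw [hρ, h1]; simp
    have hβ' : β = 0 := by rw [hβ, hρ']; simp
    have hα' : α = 1 / L := by rw [hα, hρ']; ring
    rw [hμeq, hβ', hα']
    field_simp
    norm_num
end

section
/- For M > 0, the function φ ↦ min{1/2, 3/(4(1+φ)), 1/(1+1/φ), 4/(3+2/φ)}·√M over φ > 0 attains its maximum value (3/7)√M at φ = 3/4. -/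
theorem stmt_18 (M : ℝ) (hM : 0 < M) :
    (min (min ((1 : ℝ) / 2) (3 / (4 * (1 + (3 / 4 : ℝ)))))
        (min (1 / (1 + 1 / (3 / 4 : ℝ))) (4 / (3 + 2 / (3 / 4 : ℝ)))) *
      Real.sqrt M = (3 / 7) * Real.sqrt M) ∧
    ∀ φ : ℝ, 0 < φ →
      min (min ((1 : ℝ) / 2) (3 / (4 * (1 + φ))))
          (min (1 / (1 + 1 / φ)) (4 / (3 + 2 / φ))) * Real.sqrt M ≤
        (3 / 7) * Real.sqrt M := by
  constructor
  · norm_num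
  · intro φ hφ
    have hs : (0:ℝ) ≤ Real.sqrt M := Real.sqrt_nonneg M
    have key : min (min ((1 : ℝ) / 2) (3 / (4 * (1 + φ))))
          (min (1 / (1 + 1 / φ)) (4 / (3 + 2 / φ))) ≤ 3 / 7 := by
      rcases le_total φ (3/4) with h | h
      · refine le_trans (min_le_right _ _) (le_trans (min_le_left _ _) ?_)
        rw [div_le_div_iff₀ (by positivity) (by norm_num)]
        have : (1:ℝ)/φ ≥ 4/3 := by
          rw [ge_iff_le, div_le_div_iff₀ (by norm_num) hφ]; linarith
        linarith
      · refine le_trans (min_le_left _ _) (le_trans (min_le_right _ _) ?_)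
        rw [div_le_div_iff₀ (by linarith) (by norm_num)]
        linarith
    exact mul_le_mul_of_nonneg_right key hs
end
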